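/- arXiv:2403.12016 — 2 statements merged into one kernel-verified Lean document; each statement's English description precedes it below -/
import Mathlib

section
/- Let G be an ordered graph on [n] with m > 0 edges, and let S_R(n,m) be the reversed quasi-star. Then the number of copies of the ordered left star S_L(k) in G is at least the number of copies of S_L(k) in S_R(n,m). -/
open Finset

-- The right-degree of vertex `i` in an ordered graph on `Fin n`:
-- the number of neighbors `j` with `i < j`.
open scoped Classical in
noncomputable def rdeg {n : ℕ} (G : SimpleGraph (Fin n)) (i : Fin n) : ℕ :=
  (Finset.univ.filter fun j => G.Adj i j ∧ i < j).card

-- The number of copies of the ordered left star `S_L(k)` in an ordered graph on `Fin n`: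
-- sets of `k+1` vertices whose minimum is adjacent to all the others.
open scoped Classical in
noncomputable def leftStarCount {n : ℕ} (G : SimpleGraph (Fin n)) (k : ℕ) : ℕ :=
  ((Finset.univ : Finset (Finset (Fin n))).filter fun s =>
    s.card = k + 1 ∧ ∃ v ∈ s, (∀ w ∈ s, v ≤ w) ∧ ∀ w ∈ s, w ≠ v → G.Adj v w).card

-- The number of edges of an ordered graph on `Fin n`.
open scoped Classical in
noncomputable def ecount {n : ℕ} (G : SimpleGraph (Fin n)) : ℕ :=
  (Finset.univ.filter fun p : Fin n × Fin n => p.1 < p.2 ∧ G.Adj p.1 p.2).card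

-- `f(n,a) = C(a,2) + a(n-a)`, the number of edges of the quasi-star with full part `[a]`.
def quasiStarEdges (n a : ℕ) : ℕ := a.choose 2 + a * (n - a)

-- The ordered quasi-star `S_L(n,m)` (0-indexed).
def quasiStar (n a b : ℕ) : SimpleGraph (Fin n) :=
  SimpleGraph.fromRel fun v w =>
    v.val < w.val ∧ (v.val < a ∨ (v.val = a ∧ w.val ≤ a + b))

-- The order-reversing map on `Fin n`.
def revFin {n : ℕ} (v : Fin n) : Fin n := ⟨n - 1 - v.val, by have := v.isLt; omega⟩

-- The reversed quasi-star `S_R(n,m)`: `S_L(n,m)` with the vertex order reversed.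
def rQuasiStar (n a b : ℕ) : SimpleGraph (Fin n) :=
  (quasiStar n a b).comap revFin

/-! Counting a copy of `S_L(k)` by its minimum vertex gives `∑ v, (rdeg G v).choose k`, and the
hockey-stick identity turns this into `∑ t, N t * t.choose (k - 1)`, where `N t` is the number of
vertices of right-degree greater than `t`. For every graph with `m` edges the layers satisfy
`N t ≤ n - 1 - t` and `∑ t, N t = m`. As `t.choose (k - 1)` is monotone in `t`, the weighted sum
is smallest when the lowest layers are filled to capacity, and `S_R(n,m)` does exactly that. -/

theorem sum_range_choose_eq_choose_succ (d k : ℕ) :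
    ∑ t ∈ range d, t.choose k = d.choose (k + 1) := by
  induction d with
  | zero => simp
  | succ d ih => rw [sum_range_succ, ih, Nat.choose_succ_succ, add_comm]

theorem sum_choose_succ_eq_sum_card_mul_choose {ι : Type*} [Fintype ι] (d : ι → ℕ) {T : ℕ}
    (hd : ∀ i, d i ≤ T) (k : ℕ) :
    ∑ i, (d i).choose (k + 1) = ∑ t ∈ range T, #{i | t < d i} * t.choose k := by
  simp_rw [card_filter, sum_mul, ite_mul, one_mul, zero_mul]
  rw [sum_comm]
  refine sum_congr rfl fun i _ => ?_
  rw [← sum_filter, ← sum_range_choose_eq_choose_succ]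
  congr 1
  ext t
  simp only [mem_filter, mem_range]
  exact ⟨fun ht => ⟨ht.trans_le (hd i), ht⟩, And.right⟩

theorem sum_mul_le_sum_mul_of_le_of_eq_zero {ι : Type*} [LinearOrder ι] {s : Finset ι}
    {g N w : ι → ℕ} {a : ι} (hw : Monotone w) (hN : ∀ t < a, N t ≤ g t)
    (hg : ∀ t, a < t → g t = 0) (hsum : ∑ t ∈ s, g t ≤ ∑ t ∈ s, N t) :
    ∑ t ∈ s, g t * w t ≤ ∑ t ∈ s, N t * w t := by
  have hterm : ∀ t, ((g t : ℤ) - N t) * w t ≤ ((g t : ℤ) - N t) * w a := by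
    intro t
    rcases lt_trichotomy t a with hta | rfl | hat
    · exact mul_le_mul_of_nonneg_left (by exact_mod_cast hw hta.le)
        (sub_nonneg.mpr (by exact_mod_cast hN t hta))
    · rfl
    · rw [hg t hat, Nat.cast_zero, zero_sub, neg_mul, neg_mul, neg_le_neg_iff]
      exact mul_le_mul_of_nonneg_left (by exact_mod_cast hw hat.le) (Nat.cast_nonneg _)
  zify at hsum ⊢
  rw [← sub_nonpos, ← sum_sub_distrib]
  calc ∑ t ∈ s, ((g t : ℤ) * w t - N t * w t)
      = ∑ t ∈ s, ((g t : ℤ) - N t) * w t := by simp only [sub_mul]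
    _ ≤ ∑ t ∈ s, ((g t : ℤ) - N t) * w a := sum_le_sum fun t _ => hterm t
    _ = (∑ t ∈ s, (g t : ℤ) - ∑ t ∈ s, (N t : ℤ)) * w a := by rw [← sum_sub_distrib, sum_mul]
    _ ≤ 0 := mul_nonpos_of_nonpos_of_nonneg (sub_nonpos.mpr hsum) (Nat.cast_nonneg _)

theorem sum_card_lt_eq_sum {ι : Type*} [Fintype ι] (d : ι → ℕ) {T : ℕ} (hd : ∀ i, d i ≤ T) :
    ∑ t ∈ range T, #{i | t < d i} = ∑ i, d i := by
  simpa using (sum_choose_succ_eq_sum_card_mul_choose d hd 0).symm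

section OrderedGraph

variable {n : ℕ}

open scoped Classical

theorem leftStarCount_eq_sum_choose_rdeg (G : SimpleGraph (Fin n)) (k : ℕ) :
    leftStarCount G k = ∑ v, (rdeg G v).choose k := by
  set R : Fin n → Finset (Fin n) := fun v => {w | G.Adj v w ∧ v < w}
  have hR : ∀ {v w}, w ∈ R v ↔ G.Adj v w ∧ v < w := by simp [R]
  have hmin : ∀ {v T}, T ⊆ R v → ∀ w ∈ insert v T, v ≤ w := fun hT w hw =>
    (mem_insert.mp hw).elim ge_of_eq fun hw => (hR.mp (hT hw)).2.le
  have hnotMem : ∀ {v T}, T ⊆ R v → v ∉ T := fun hT hv => lt_irrefl _ (hR.mp (hT hv)).2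
  have hstars : ({s | s.card = k + 1 ∧ ∃ v ∈ s, (∀ w ∈ s, v ≤ w) ∧ ∀ w ∈ s, w ≠ v → G.Adj v w} :
      Finset (Finset (Fin n))) = univ.biUnion fun v => ((R v).powersetCard k).image (insert v) := by
    ext s
    simp only [mem_filter, mem_univ, true_and, mem_biUnion, mem_image, mem_powersetCard]
    constructor
    · rintro ⟨hcard, v, hv, hvmin, hvadj⟩
      refine ⟨v, s.erase v, ⟨fun w hw => ?_, by rw [card_erase_of_mem hv, hcard]; rfl⟩,
        insert_erase hv⟩
      obtain ⟨hwv, hws⟩ := mem_erase.mp hw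
      exact hR.mpr ⟨hvadj w hws hwv, (hvmin w hws).lt_of_ne' hwv⟩
    · rintro ⟨v, T, ⟨hT, rfl⟩, rfl⟩
      refine ⟨card_insert_of_notMem (hnotMem hT), v, mem_insert_self v T, hmin hT,
        fun w hw hwv => ?_⟩
      exact (hR.mp (hT ((mem_insert.mp hw).resolve_left hwv))).1
  rw [leftStarCount, hstars, card_biUnion]
  · refine sum_congr rfl fun v _ => ?_
    rw [card_image_of_injOn, card_powersetCard]
    · rfl
    intro T hT T' hT' hTT'
    rw [mem_coe, mem_powersetCard] at hT hT'
    simpa [erase_insert (hnotMem hT.1), erase_insert (hnotMem hT'.1)] using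
      congrArg (erase · v) hTT'
  · intro v _ v' _ hvv'
    simp only [Function.onFun, disjoint_left, mem_image, mem_powersetCard]
    rintro _ ⟨T, ⟨hT, _⟩, rfl⟩ ⟨T', ⟨hT', _⟩, hTT'⟩
    exact hvv' (le_antisymm (hmin hT' v (hTT' ▸ mem_insert_self v T))
      (hmin hT v' (hTT' ▸ mem_insert_self v' T'))).symm

theorem rdeg_le_sub_one_sub (G : SimpleGraph (Fin n)) (i : Fin n) : rdeg G i ≤ n - 1 - i := by
  rw [rdeg, ← Fin.card_Ioi]
  exact card_le_card fun j hj => mem_Ioi.mpr (mem_filter.mp hj).2.2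

theorem card_lt_rdeg_le (G : SimpleGraph (Fin n)) (t : ℕ) : #{i | t < rdeg G i} ≤ n - 1 - t := by
  rw [← card_range (n - 1 - t)]
  refine card_le_card_of_injOn Fin.val (fun i hi => ?_) Fin.val_injective.injOn
  have := (mem_filter.mp hi).2.trans_le (rdeg_le_sub_one_sub G i)
  simp only [coe_range, Set.mem_Iio]
  omega

theorem sum_rdeg_eq_ecount (G : SimpleGraph (Fin n)) : ∑ i, rdeg G i = ecount G := by
  simp only [rdeg, ecount, card_filter]
  rw [Fintype.sum_prod_type]
  exact sum_congr rfl fun i _ => sum_congr rfl fun j _ => by simp [and_comm]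

theorem rdeg_comap_rev (G : SimpleGraph (Fin n)) (i : Fin n) :
    rdeg (G.comap Fin.rev) i = #{u | G.Adj i.rev u ∧ u < i.rev} := by
  refine card_equiv Fin.revPerm fun j => ?_
  simp [Fin.rev_lt_rev]

theorem revFin_eq_rev : (revFin : Fin n → Fin n) = Fin.rev :=
  funext fun v => Fin.ext (by simp only [revFin, Fin.val_rev]; omega)

theorem card_quasiStar_lt_le (a b : ℕ) (v : Fin n) :
    #{u | (quasiStar n a b).Adj v u ∧ u < v} ≤ a + if a < v ∧ v ≤ a + b then 1 else 0 := by
  have hsub : ({u | (quasiStar n a b).Adj v u ∧ u < v} : Finset (Fin n)) ⊆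
      ({u | u.val < a} : Finset (Fin n)) ∪
        ({u | u.val = a ∧ a < v ∧ v ≤ a + b} : Finset (Fin n)) := by
    intro u hu
    simp only [quasiStar, mem_filter, mem_univ, true_and, SimpleGraph.fromRel_adj, mem_union,
      Fin.lt_def] at hu ⊢
    omega
  refine (card_le_card hsub).trans ((card_union_le _ _).trans (add_le_add ?_ ?_))
  · rw [← card_range a]
    refine card_le_card_of_injOn Fin.val (fun u hu => ?_) Fin.val_injective.injOn
    simpa using hu
  · split_ifs with hv
    · exact card_le_one.mpr fun u hu u' hu' => Fin.ext (by simp at hu hu'; omega)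
    · simp [hv]

theorem rdeg_rQuasiStar_le (a b : ℕ) (i : Fin n) :
    rdeg (rQuasiStar n a b) i ≤ a + if a < n - 1 - i ∧ n - 1 - i ≤ a + b then 1 else 0 := by
  have hrev : (i.rev : ℕ) = n - 1 - i := by rw [Fin.val_rev]; omega
  rw [rQuasiStar, revFin_eq_rev, rdeg_comap_rev, ← hrev]
  exact card_quasiStar_lt_le a b i.rev

-- The greedy layer profile: layers below `a` filled to capacity, the remaining `b` in layer `a`.
def quasiStarLayer (n a b t : ℕ) : ℕ := if t < a then n - 1 - t else if t = a then b else 0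

theorem card_lt_rdeg_rQuasiStar_le (a b t : ℕ) :
    #{i | t < rdeg (rQuasiStar n a b) i} ≤ quasiStarLayer n a b t := by
  have hdeg := rdeg_rQuasiStar_le (n := n) a b
  unfold quasiStarLayer
  split_ifs with hta hta'
  · exact card_lt_rdeg_le _ t
  · subst hta'
    calc #{i | t < rdeg (rQuasiStar n t b) i} ≤ #(Ioc t (t + b)) := by
          refine card_le_card_of_injOn (fun i => n - 1 - i) (fun i hi => ?_)
            fun i _ j _ hij => Fin.ext ?_
          · have := (mem_filter.mp hi).2.trans_le (hdeg i)
            simp only [coe_Ioc, Set.mem_Ioc]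
            split_ifs at this <;> omega
          · have := i.isLt; have := j.isLt
            simp only at hij
            omega
      _ = b := by simp
  · refine (card_eq_zero.mpr (filter_eq_empty_iff.mpr fun i _ h => ?_)).le
    have := h.trans_le (hdeg i)
    split_ifs at this <;> omega

end OrderedGraph

theorem sum_range_sub_one_sub {n a : ℕ} (h : a ≤ n) :
    ∑ t ∈ range a, (n - 1 - t) = quasiStarEdges n a := by
  induction a with
  | zero => simp [quasiStarEdges]
  | succ a ih =>
    rw [sum_range_succ, ih (by omega), quasiStarEdges, quasiStarEdges, Nat.choose_succ_succ,
      Nat.choose_one_right]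
    obtain ⟨x, rfl⟩ : ∃ x, n = a + 1 + x := ⟨n - (a + 1), by omega⟩
    rw [show a + 1 + x - a = x + 1 by omega, show a + 1 + x - (a + 1) = x by omega,
      show a + 1 + x - 1 - a = x by omega]
    ring

theorem sum_quasiStarLayer {n a : ℕ} (b : ℕ) (h : a ≤ n) :
    ∑ t ∈ range (n + 1), quasiStarLayer n a b t = quasiStarEdges n a + b := by
  rw [← sum_subset (range_subset_range.mpr (by omega : a + 1 ≤ n + 1)), sum_range_succ,
    ← sum_range_sub_one_sub h]
  · simp +contextual [quasiStarLayer, sum_ite, filter_true_of_mem]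
  · intro t _ ht
    simp only [quasiStarLayer, mem_range] at ht ⊢
    split_ifs <;> omega

theorem rQuasiStar_le_leftStarCount_general {n m a b k : ℕ} (G : SimpleGraph (Fin n))
    (hG : ecount G = m) (hk : 0 < k)
    (han : a ≤ n) (ha : quasiStarEdges n a ≤ m)
    (hb : b = m - quasiStarEdges n a) :
    leftStarCount (rQuasiStar n a b) k ≤ leftStarCount G k := by
  obtain ⟨k, rfl⟩ := Nat.exists_eq_add_one_of_ne_zero hk.ne'
  have hdeg (H : SimpleGraph (Fin n)) (i : Fin n) : rdeg H i ≤ n + 1 :=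
    (rdeg_le_sub_one_sub H i).trans (by omega)
  simp only [leftStarCount_eq_sum_choose_rdeg, sum_choose_succ_eq_sum_card_mul_choose _ (hdeg _)]
  calc ∑ t ∈ range (n + 1), #{i | t < rdeg (rQuasiStar n a b) i} * t.choose k
      ≤ ∑ t ∈ range (n + 1), quasiStarLayer n a b t * t.choose k :=
        sum_le_sum fun t _ => Nat.mul_le_mul_right _ (card_lt_rdeg_rQuasiStar_le a b t)
    _ ≤ ∑ t ∈ range (n + 1), #{i | t < rdeg G i} * t.choose k := by
        refine sum_mul_le_sum_mul_of_le_of_eq_zero (a := a) (Nat.choose_mono k)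
          (fun t ht => ?_) (fun t ht => ?_) ?_
        · simpa [quasiStarLayer, ht] using card_lt_rdeg_le G t
        · simp [quasiStarLayer, ht.ne', ht.not_gt]
        · rw [sum_quasiStarLayer b han, sum_card_lt_eq_sum _ (hdeg G), sum_rdeg_eq_ecount, hG]
          omega

/-- Among ordered graphs on `[n]` with `m > 0` edges, the reversed quasi-star `S_R(n,m)`
minimizes the number of copies of the ordered left star `S_L(k)`. -/
theorem rQuasiStar_le_leftStarCount {n m a b k : ℕ} (G : SimpleGraph (Fin n))
    (hm : 0 < m) (hmn : m ≤ n.choose 2) (hG : ecount G = m) (hk : 0 < k)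
    (han : a ≤ n) (ha : quasiStarEdges n a ≤ m)
    (hamax : ∀ a' ≤ n, quasiStarEdges n a' ≤ m → a' ≤ a)
    (hb : b = m - quasiStarEdges n a) :
    leftStarCount (rQuasiStar n a b) k ≤ leftStarCount G k :=
  rQuasiStar_le_leftStarCount_general G hG hk han ha hb
end

section
/- For each γ ∈ [0,1] with η = 1 - sqrt(1-γ), the complement of a clique on a (1-η)-fraction of vertices (i.e., the join of an independent set of size floor((1-η)n) with a clique on the remaining vertices) has edge density tending to γ and S_k-density ρ(S_k, G_n) tending to η + (1-η)·η^k. -/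
open Finset

-- The degree of a vertex.
open scoped Classical in
noncomputable def deg {n : ℕ} (G : SimpleGraph (Fin n)) (v : Fin n) : ℕ :=
  (Finset.univ.filter fun w => G.Adj v w).card

-- `N(S_k, G) = ∑_v C(d(v), k)`, the number of copies of the `k`-edge star.
noncomputable def starCount {n : ℕ} (G : SimpleGraph (Fin n)) (k : ℕ) : ℕ :=
  ∑ v : Fin n, (deg G v).choose k

-- `ρ(S_k, G) = N(S_k, G)·k!/(n)_{k+1}`, the `S_k`-density of a graph on `n` vertices.
noncomputable def starDensity {n : ℕ} (G : SimpleGraph (Fin n)) (k : ℕ) : ℝ :=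
  (starCount G k * k.factorial : ℝ) / (n.descFactorial (k + 1) : ℝ)

-- The complement of a clique with isolated vertices: the vertex set splits into `B`
-- (the first `⌊η·n⌋` vertices) and `A`; all pairs inside `B` and all pairs between
-- `A` and `B` are edges, and there are no edges inside `A`.
noncomputable def cliqueComplement (n : ℕ) (γ : ℝ) : SimpleGraph (Fin n) :=
  SimpleGraph.fromRel fun v w =>
    v.val < ⌊(1 - Real.sqrt (1 - γ)) * (n : ℝ)⌋₊ ∨
    w.val < ⌊(1 - Real.sqrt (1 - γ)) * (n : ℝ)⌋₊

/-!
The vertices of the clique part have degree `n - 1` and the others degree `m = ⌊η n⌋`, so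
`k! · N(S_k) = m (n-1)_k + (n-m) (m)_k`. Divided by `(n)_{k+1} ~ n^{k+1}` this tends to
`η + (1-η) η^k`. By the handshake lemma the edge density is `ρ(S_1)`, whose limit
`2η - η² = 1 - (1-η)²` is `γ` for `η = 1 - √(1-γ)`.
-/

open Filter Topology

lemma tendsto_natCast_sub_div {x : ℕ → ℕ} {c : ℝ} (i : ℕ)
    (h : Tendsto (fun n : ℕ => (x n : ℝ) / n) atTop (𝓝 c)) :
    Tendsto (fun n : ℕ => ((x n - i : ℕ) : ℝ) / n) atTop (𝓝 c) := by
  have hlow : Tendsto (fun n : ℕ => ((x n : ℝ) - i) / n) atTop (𝓝 c) := by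
    simpa [sub_div] using h.sub (tendsto_const_div_atTop_nhds_zero_nat (i : ℝ))
  refine tendsto_of_tendsto_of_tendsto_of_le_of_le hlow h (fun n => ?_) (fun n => ?_)
  · have : (x n : ℝ) ≤ ((x n - i : ℕ) : ℝ) + i := by exact_mod_cast le_tsub_add
    gcongr
    linarith
  · gcongr
    exact Nat.sub_le _ _

lemma tendsto_descFactorial_div_pow {x : ℕ → ℕ} {c : ℝ} (k : ℕ)
    (h : Tendsto (fun n : ℕ => (x n : ℝ) / n) atTop (𝓝 c)) :
    Tendsto (fun n : ℕ => ((x n).descFactorial k : ℝ) / (n : ℝ) ^ k) atTop (𝓝 (c ^ k)) := by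
  have hprod : ∀ n : ℕ, ((x n).descFactorial k : ℝ) / (n : ℝ) ^ k =
      ∏ i ∈ range k, ((x n - i : ℕ) : ℝ) / n := by
    intro n
    rw [prod_div_distrib, prod_const, card_range, Nat.descFactorial_eq_prod_range, Nat.cast_prod]
  simpa [hprod] using tendsto_finsetProd (range k) fun i _ => tendsto_natCast_sub_div i h

namespace SimpleGraph

variable {n : ℕ}

open scoped Classical in
lemma ecount_eq_card_edgeFinset (G : SimpleGraph (Fin n)) : ecount G = #G.edgeFinset := by
  unfold ecount
  refine card_nbij' (fun p => s(p.1, p.2)) (fun e => (e.inf, e.sup)) ?_ ?_ ?_ ?_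
  · rintro ⟨a, b⟩ hab
    simp_all
  · intro e he
    induction e using Sym2.ind with
    | _ a b =>
      have hab : G.Adj a b := by simpa using he
      rcases lt_or_gt_of_ne hab.ne with h | h
      · simp [h.le, h, hab]
      · simp [h.le, h, hab.symm]
  · rintro ⟨a, b⟩ hab
    have : a < b := (mem_filter.1 hab).2.1
    simp [this.le]
  · intro e _
    exact Sym2.sortEquiv.left_inv e

open scoped Classical in
lemma deg_eq_degree (G : SimpleGraph (Fin n)) (v : Fin n) : deg G v = G.degree v := by
  rw [← card_neighborFinset_eq_degree, neighborFinset_eq_filter, deg]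

lemma two_mul_ecount (G : SimpleGraph (Fin n)) : 2 * ecount G = starCount G 1 := by
  classical
  simp only [starCount, Nat.choose_one_right, deg_eq_degree, sum_degrees_eq_twice_card_edges,
    ecount_eq_card_edgeFinset]

lemma ecount_div_choose_two (G : SimpleGraph (Fin n)) :
    (ecount G : ℝ) / n.choose 2 = starDensity G 1 := by
  rw [starDensity, Nat.descFactorial_eq_factorial_mul_choose, ← two_mul_ecount]
  simp [mul_div_mul_left]

def completeSplitGraph (n m : ℕ) : SimpleGraph (Fin n) :=
  fromRel fun v w => v.val < m ∨ w.val < m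

variable {m : ℕ}

lemma completeSplitGraph_adj {v w : Fin n} :
    (completeSplitGraph n m).Adj v w ↔ v ≠ w ∧ (v.val < m ∨ w.val < m) := by
  simp only [completeSplitGraph, fromRel_adj, or_self_iff, or_comm]

lemma deg_completeSplitGraph (hm : m ≤ n) (v : Fin n) :
    deg (completeSplitGraph n m) v = if v.val < m then n - 1 else m := by
  classical
  unfold deg
  split_ifs with hv
  · have : univ.filter (fun w => (completeSplitGraph n m).Adj v w) = univ.erase v := by
      ext w
      simp [completeSplitGraph_adj, hv, eq_comm]
    rw [this, card_erase_of_mem (mem_univ v), card_univ, Fintype.card_fin]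
  · have : univ.filter (fun w => (completeSplitGraph n m).Adj v w) =
        univ.filter fun w : Fin n => w.val < m := by
      ext w
      simp only [mem_filter, mem_univ, true_and, completeSplitGraph_adj, hv, false_or]
      exact ⟨And.right, fun hw => ⟨by rintro rfl; exact hv hw, hw⟩⟩
    rw [this, Fin.card_filter_val_lt, min_eq_right hm]

lemma starCount_completeSplitGraph (hm : m ≤ n) (k : ℕ) :
    starCount (completeSplitGraph n m) k = m * (n - 1).choose k + (n - m) * m.choose k := by
  classical
  simp only [starCount, deg_completeSplitGraph hm, apply_ite (Nat.choose · k), sum_ite,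
    sum_const, smul_eq_mul, Fin.card_filter_val_lt, min_eq_right hm]
  have := card_filter_add_card_filter_not (s := univ) (p := fun x : Fin n => x.val < m)
  rw [Fin.card_filter_val_lt, min_eq_right hm, card_univ, Fintype.card_fin] at this
  congr 2
  omega

lemma starDensity_completeSplitGraph (hm : m ≤ n) (k : ℕ) :
    starDensity (completeSplitGraph n m) k =
      (m * (n - 1).descFactorial k + (n - m : ℕ) * m.descFactorial k) /
        n.descFactorial (k + 1) := by
  rw [starDensity, starCount_completeSplitGraph hm,
    Nat.descFactorial_eq_factorial_mul_choose (n - 1), Nat.descFactorial_eq_factorial_mul_choose m]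
  push_cast
  ring

theorem tendsto_starDensity_completeSplitGraph {m : ℕ → ℕ} {η : ℝ} (hm : ∀ n, m n ≤ n)
    (hη : Tendsto (fun n : ℕ => (m n : ℝ) / n) atTop (𝓝 η)) (k : ℕ) :
    Tendsto (fun n => starDensity (completeSplitGraph n (m n)) k) atTop
      (𝓝 (η + (1 - η) * η ^ k)) := by
  have hid : Tendsto (fun n : ℕ => (n : ℝ) / n) atTop (𝓝 1) :=
    tendsto_const_nhds.congr' <| (eventually_ne_atTop 0).mono fun n hn =>
      (div_self (Nat.cast_ne_zero.2 hn)).symm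
  have hrest : Tendsto (fun n : ℕ => ((n - m n : ℕ) : ℝ) / n) atTop (𝓝 (1 - η)) := by
    simpa [Nat.cast_sub (hm _), sub_div] using hid.sub hη
  have hclique := tendsto_descFactorial_div_pow k (tendsto_natCast_sub_div 1 hid)
  have hindep := tendsto_descFactorial_div_pow k hη
  have hall := tendsto_descFactorial_div_pow (k + 1) hid
  rw [one_pow] at hclique hall
  -- `starDensity_completeSplitGraph` with numerator and denominator divided by `n ^ (k + 1)`
  have hlim := ((hη.mul hclique).add (hrest.mul hindep)).div hall one_ne_zero
  rw [mul_one, div_one] at hlim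
  refine hlim.congr' <| (eventually_ge_atTop (k + 1)).mono fun n hn => ?_
  have hn0 : (n : ℝ) ≠ 0 := Nat.cast_ne_zero.2 (by omega)
  have hD : (n.descFactorial (k + 1) : ℝ) ≠ 0 :=
    Nat.cast_ne_zero.2 (Nat.descFactorial_eq_zero_iff_lt.not.2 (by omega))
  dsimp only [Pi.div_apply]
  rw [starDensity_completeSplitGraph (hm n)]
  field_simp
  ring

end SimpleGraph

theorem cliqueComplement_starDensity_general (γ : ℝ) (hγ : γ ∈ Set.Icc (0:ℝ) 1) (k : ℕ) :
    Filter.Tendsto (fun n : ℕ => (ecount (cliqueComplement n γ) : ℝ) / (n.choose 2 : ℝ))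
      Filter.atTop (nhds γ) ∧
    Filter.Tendsto (fun n : ℕ => starDensity (cliqueComplement n γ) k)
      Filter.atTop
      (nhds ((1 - Real.sqrt (1 - γ)) +
        (1 - (1 - Real.sqrt (1 - γ))) * (1 - Real.sqrt (1 - γ)) ^ k)) := by
  obtain ⟨hγ0, hγ1⟩ := hγ
  set η := 1 - Real.sqrt (1 - γ) with hη_def
  have hη0 : 0 ≤ η := sub_nonneg.2 (Real.sqrt_le_one.2 (by linarith))
  have hη1 : η ≤ 1 := sub_le_self _ (Real.sqrt_nonneg _)
  have hsize : ∀ n : ℕ, ⌊η * n⌋₊ ≤ n := fun n =>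
    Nat.floor_le_of_le (mul_le_of_le_one_left n.cast_nonneg hη1)
  have hdensity : Tendsto (fun n : ℕ => (⌊η * n⌋₊ : ℝ) / n) atTop (𝓝 η) :=
    (tendsto_nat_floor_mul_div_atTop hη0).comp tendsto_natCast_atTop_atTop
  have hstar := SimpleGraph.tendsto_starDensity_completeSplitGraph hsize hdensity
  refine ⟨?_, hstar k⟩
  have hγ_eq : η + (1 - η) * η ^ 1 = γ := by
    have := Real.sq_sqrt (show 0 ≤ 1 - γ by linarith)
    rw [hη_def]
    linear_combination -this
  have hedge := hstar 1
  rw [hγ_eq] at hedge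
  simp only [SimpleGraph.ecount_div_choose_two]
  exact hedge

/-- With `η = 1 - √(1-γ)`, the complement of a clique on a `(1-η)`-fraction of the
vertices has edge density tending to `γ` and `S_k`-density tending to
`η + (1-η)·η^k`. -/
theorem cliqueComplement_starDensity (γ : ℝ) (hγ : γ ∈ Set.Icc (0:ℝ) 1) (k : ℕ)
    (hk : 0 < k) :
    Filter.Tendsto (fun n : ℕ => (ecount (cliqueComplement n γ) : ℝ) / (n.choose 2 : ℝ))
      Filter.atTop (nhds γ) ∧
    Filter.Tendsto (fun n : ℕ => starDensity (cliqueComplement n γ) k)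
      Filter.atTop
      (nhds ((1 - Real.sqrt (1 - γ)) +
        (1 - (1 - Real.sqrt (1 - γ))) * (1 - Real.sqrt (1 - γ)) ^ k)) :=
  cliqueComplement_starDensity_general γ hγ k
end
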